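/- arXiv:0908.1204 — 4 statements merged into one kernel-verified Lean document; each statement's English description precedes it below -/
import Mathlib

section
/- On ℝ³ with metric g_ij(x) = f(x) δ_ij for a smooth positive function f, the vector field C_i = g_ij ε^j_{kl} n^k x^l (rotation around the axis n) satisfies the Killing equation D_(i C_j) = 0 (symmetrized covariant derivative with the Levi-Civita connection vanishes) if and only if (n × ∇f(x)) · x = 0 for all x. -/
open Matrix BigOperators

noncomputable section

abbrev V3 := Fin 3 → ℝ

/-- Partial derivative ∂_i f(x). -/
def pd (f : V3 → ℝ) (i : Fin 3) (x : V3) : ℝ := fderiv ℝ f x (Pi.single i 1)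

/-- Gradient of f. -/
def grad (f : V3 → ℝ) (x : V3) : V3 := fun i => pd f i x

/-- Levi-Civita connection of the conformally flat metric g_ij = f δ_ij. -/
def Γconf (f : V3 → ℝ) (k i j : Fin 3) (x : V3) : ℝ :=
  (1 / (2 * f x)) * ((if k = i then pd f j x else 0) + (if k = j then pd f i x else 0)
    - (if i = j then pd f k x else 0))

/-- The rotation one-form C_i = g_ij ε^j_{kl} n^k x^l = f (n × x)_i. -/
def Crot (f : V3 → ℝ) (n : V3) (i : Fin 3) (x : V3) : ℝ := f x * (crossProduct n x) i

/-- Covariant derivative D_i C_j = ∂_i C_j − Γ^k_ij C_k. -/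
def Dcov (f : V3 → ℝ) (n : V3) (i j : Fin 3) (x : V3) : ℝ :=
  pd (Crot f n j) i x - ∑ k, Γconf f k i j x * Crot f n k x

lemma pd_Crot (f : V3 → ℝ) (hf : ContDiff ℝ (⊤ : ℕ∞) f) (n : V3) (j i : Fin 3) (x : V3) :
    pd (Crot f n j) i x
      = pd f i x * (crossProduct n x) j + f x * (crossProduct n (Pi.single i 1)) j := by
  classical
  set L : V3 →L[ℝ] ℝ :=
    LinearMap.toContinuousLinearMap ((LinearMap.proj j).comp (crossProduct n)) with hL
  have hdf : DifferentiableAt ℝ f x := (hf.differentiable (by simp)) x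
  have hgl : DifferentiableAt ℝ (fun y : V3 => (crossProduct n y) j) x := by
    have := L.differentiableAt (x := x)
    exact this
  have : Crot f n j = fun y => f y * (fun y : V3 => (crossProduct n y) j) y := rfl
  unfold pd
  rw [this, fderiv_fun_mul hdf hgl]
  have hLf : fderiv ℝ (fun y : V3 => (crossProduct n y) j) x = L := by
    have := L.fderiv (x := x)
    exact this
  rw [hLf]
  simp [hL]
  ring

lemma key (f : V3 → ℝ) (hf : ContDiff ℝ (⊤ : ℕ∞) f) (hfpos : ∀ x, 0 < f x) (n : V3)
    (i j : Fin 3) (x : V3) :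
    Dcov f n i j x + Dcov f n j i x
      = (if i = j then (1:ℝ) else 0) * ((crossProduct n x) ⬝ᵥ grad f x) := by
  have hfx : f x ≠ 0 := (hfpos x).ne'
  unfold Dcov Γconf
  rw [pd_Crot f hf n j i x, pd_Crot f hf n i j x]
  fin_cases i <;> fin_cases j <;>
    simp [Crot, Fin.sum_univ_three, cross_apply, dotProduct, grad, Pi.single_apply] <;>
    field_simp <;> ring

lemma triple (a b c : V3) :
    (crossProduct a b) ⬝ᵥ c = - ((crossProduct a c) ⬝ᵥ b) := by
  simp [cross_apply, dotProduct, Fin.sum_univ_three]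
  ring

/-- C_i = g_ij ε^j_{kl} n^k x^l is a Killing vector of g_ij = f δ_ij
iff (n × ∇f(x)) · x = 0 for all x. -/
theorem rotation_killing_iff (f : V3 → ℝ) (hf : ContDiff ℝ (⊤ : ℕ∞) f) (hfpos : ∀ x, 0 < f x)
    (n : V3) :
    (∀ i j x, Dcov f n i j x + Dcov f n j i x = 0) ↔
      ∀ x : V3, (crossProduct n (grad f x)) ⬝ᵥ x = 0 := by
  constructor
  · intro h x
    have h0 := h 0 0 x
    rw [key f hf hfpos n 0 0 x] at h0
    simp at h0
    rw [triple]
    simp [h0]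
  · intro h i j x
    rw [key f hf hfpos n i j x]
    have := h x
    rw [triple] at this
    have h0 : (crossProduct n x) ⬝ᵥ grad f x = 0 := by linarith
    simp [h0]
end
end

section
/- For f(x) = f₀ + m₁/|x − a| + m₂/|x + a| with a ≠ 0, the condition (n × ∇f(x)) · x = 0 for all x outside {±a} holds if n is parallel to a. -/
/-!
Each term `mᵢ / |x - p|` has gradient `-mᵢ (x - p) / |x - p|³`, so `∇f(x)` lies in the span
of `x - a` and `x + a`, i.e. of `x` and `a`. Crossing with `n = c a` kills the `a`-component and
leaves a multiple of `a × x`, which is orthogonal to `x`.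
-/

open Matrix BigOperators

noncomputable section

def norm3 (x : V3) : ℝ := Real.sqrt (∑ i, x i ^ 2)

theorem hasFDerivAt_sum_sq_sub {ι : Type*} [Fintype ι] (p x : ι → ℝ) :
    HasFDerivAt (fun y : ι → ℝ => ∑ j, (y j - p j) ^ 2)
      (∑ j, (2 * (x j - p j)) • ContinuousLinearMap.proj (R := ℝ) (φ := fun _ : ι => ℝ) j) x :=
  HasFDerivAt.fun_sum fun j _ => by
    simpa using ((hasFDerivAt_apply j x).sub_const (p j)).pow 2

theorem norm3_sub_pos {x p : V3} (h : x ≠ p) : 0 < norm3 (x - p) := by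
  obtain ⟨i, hi⟩ := Function.ne_iff.mp h
  refine Real.sqrt_pos.mpr (Finset.sum_pos' (fun j _ => sq_nonneg _) ⟨i, Finset.mem_univ i, ?_⟩)
  have := sub_ne_zero.mpr hi
  positivity

theorem hasFDerivAt_inv_norm3_sub {x p : V3} (h : x ≠ p) :
    HasFDerivAt (fun y => (norm3 (y - p))⁻¹)
      (-(norm3 (x - p) ^ 3)⁻¹ •
        ∑ j, (x j - p j) • ContinuousLinearMap.proj (R := ℝ) (φ := fun _ : Fin 3 => ℝ) j) x := by
  have hnorm : ∀ y, norm3 (y - p) = Real.sqrt (∑ j, (y j - p j) ^ 2) := fun y => rfl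
  have hq : 0 < ∑ j, (x j - p j) ^ 2 := Real.sqrt_pos.mp (hnorm x ▸ norm3_sub_pos h)
  have hD := ((Real.hasDerivAt_sqrt hq.ne').inv (Real.sqrt_pos.mpr hq).ne').comp_hasFDerivAt x
    (hasFDerivAt_sum_sq_sub p x)
  simp only [← hnorm] at hD
  refine hD.congr_fderiv ?_
  rw [show ∑ j, (2 * (x j - p j)) • ContinuousLinearMap.proj (R := ℝ) (φ := fun _ : Fin 3 => ℝ) j
      = (2 : ℝ) • ∑ j, (x j - p j) • ContinuousLinearMap.proj j by
    simp_rw [Finset.smul_sum, smul_smul], smul_smul]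
  congr 1
  field_simp

theorem grad_two_center {a b x : V3} (f₀ m₁ m₂ : ℝ) (ha : x ≠ a) (hb : x ≠ b) :
    grad (fun y => f₀ + m₁ / norm3 (y - a) + m₂ / norm3 (y - b)) x =
      (-m₁ / norm3 (x - a) ^ 3) • (x - a) + (-m₂ / norm3 (x - b) ^ 3) • (x - b) := by
  have hD : HasFDerivAt (fun y => f₀ + m₁ / norm3 (y - a) + m₂ / norm3 (y - b)) _ x :=
    ((hasFDerivAt_const f₀ x).fun_add
      ((hasFDerivAt_inv_norm3_sub ha).const_mul m₁)).fun_add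
      ((hasFDerivAt_inv_norm3_sub hb).const_mul m₂)
  ext i
  simp only [grad, pd, hD.fderiv, zero_add, _root_.add_apply, _root_.smul_apply,
    _root_.sum_apply, ContinuousLinearMap.proj_apply, Pi.single_apply, smul_eq_mul, mul_ite,
    mul_one, mul_zero, Finset.sum_ite_eq', Finset.mem_univ, ↓reduceIte, neg_mul, mul_neg,
    Pi.add_apply, Pi.smul_apply, Pi.sub_apply]
  ring

theorem smul_cross_dotProduct_eq_zero {R : Type*} [CommRing R] (c s t : R) (a x : Fin 3 → R) :
    (c • a) ⨯₃ (s • x + t • a) ⬝ᵥ x = 0 := by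
  simp [cross_self, dotProduct_comm _ x, dot_cross_self]

theorem two_center_axial_rotation_general (f₀ m₁ m₂ : ℝ) (a n : V3)
    (f : V3 → ℝ)
    (hf : ∀ x, f x = f₀ + m₁ / norm3 (x - a) + m₂ / norm3 (x + a))
    (hn : ∃ c : ℝ, n = c • a) :
    ∀ x : V3, x ≠ a → x ≠ -a → (crossProduct n (grad f x)) ⬝ᵥ x = 0 := by
  obtain ⟨c, rfl⟩ := hn
  intro x hxa hxna
  have hf' : f = fun y => f₀ + m₁ / norm3 (y - a) + m₂ / norm3 (y - -a) :=
    funext fun y => by rw [hf, sub_neg_eq_add]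
  set α := -m₁ / norm3 (x - a) ^ 3
  set β := -m₂ / norm3 (x - -a) ^ 3
  have hgrad : grad f x = (α + β) • x + (β - α) • a := by
    rw [hf', grad_two_center f₀ m₁ m₂ hxa hxna]
    module
  rw [hgrad]
  exact smul_cross_dotProduct_eq_zero c _ _ a x

/-- for the two-center function
f(x) = f₀ + m₁/|x − a| + m₂/|x + a| with a ≠ 0, if n is parallel to a then
(n × ∇f(x)) · x = 0 for all x outside {a, −a}. -/
theorem two_center_axial_rotation (f₀ m₁ m₂ : ℝ) (a n : V3) (ha : a ≠ 0)
    (f : V3 → ℝ)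
    (hf : ∀ x, f x = f₀ + m₁ / norm3 (x - a) + m₂ / norm3 (x + a))
    (hn : ∃ c : ℝ, n = c • a) :
    ∀ x : V3, x ≠ a → x ≠ -a → (crossProduct n (grad f x)) ⬝ᵥ x = 0 :=
  two_center_axial_rotation_general f₀ m₁ m₂ a n f hf hn
end
end

section
/- In the flat Kepler-plus-monopole problem with potential V(x) = q²g²/(2|x|²) + β/|x| + γ, the Runge-Lenz vector K = Π × J + β x/|x| is conserved along solutions, where J = x × Π − qg x/|x|, Π = ẋ, and Π̇ = q ẋ × B − ∇V with B = g x/|x|³. -/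
open Matrix BigOperators

noncomputable section

/-- Dirac monopole field B(x) = g x/|x|³. -/
def Bmon (g : ℝ) (y : V3) : V3 := (g / norm3 y ^ 3) • y

lemma sum_sq_pos (y : V3) (hy : y ≠ 0) : 0 < ∑ i, y i ^ 2 := by
  rcases Function.ne_iff.mp hy with ⟨i, hi⟩
  exact Finset.sum_pos' (fun j _ => sq_nonneg _)
    ⟨i, Finset.mem_univ i, (sq_nonneg _).lt_of_ne (Ne.symm (pow_ne_zero 2 hi))⟩

lemma norm3_pos (y : V3) (hy : y ≠ 0) : 0 < norm3 y :=
  Real.sqrt_pos.mpr (sum_sq_pos y hy)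

lemma norm3_sq (y : V3) : norm3 y ^ 2 = ∑ i, y i ^ 2 :=
  Real.sq_sqrt (Finset.sum_nonneg fun _ _ => sq_nonneg _)

lemma hasFDerivAt_sumsq (y : V3) :
    HasFDerivAt (fun z : V3 => ∑ i, z i ^ 2)
      (∑ i, (2 * y i) • (ContinuousLinearMap.proj (R := ℝ) (φ := fun _ : Fin 3 => ℝ) i)) y := by
  have h : ∀ i : Fin 3, HasFDerivAt (fun z : V3 => z i ^ 2)
      ((2 * y i) • (ContinuousLinearMap.proj (R := ℝ) (φ := fun _ : Fin 3 => ℝ) i)) y := by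
    intro i
    have := (hasDerivAt_pow 2 (y i)).comp_hasFDerivAt y
      ((ContinuousLinearMap.proj (R := ℝ) (φ := fun _ : Fin 3 => ℝ) i).hasFDerivAt)
    exact this.congr_fderiv (by norm_num)
  exact HasFDerivAt.fun_sum (fun i _ => h i)

lemma gradV (q g β γ : ℝ) (V : V3 → ℝ)
    (hV : ∀ y, V y = q ^ 2 * g ^ 2 / (2 * norm3 y ^ 2) + β / norm3 y + γ)
    (y : V3) (hy : y ≠ 0) :
    grad V y = (-(q ^ 2 * g ^ 2 / norm3 y ^ 4) - β / norm3 y ^ 3) • y := by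
  have hs : 0 < ∑ i, y i ^ 2 := sum_sq_pos y hy
  have hr : 0 < norm3 y := norm3_pos y hy
  have hrs : norm3 y ^ 2 = ∑ i, y i ^ 2 := norm3_sq y
  set s : ℝ := ∑ i, y i ^ 2 with hsdef
  have hsqrt : Real.sqrt s = norm3 y := rfl
  have hVfun : V = (fun u : ℝ => q ^ 2 * g ^ 2 / 2 * u⁻¹ + β * (Real.sqrt u)⁻¹ + γ) ∘
      (fun z : V3 => ∑ i, z i ^ 2) := by
    funext z
    show V z = _
    rw [hV z]
    simp only [Function.comp_apply, norm3]
    rw [Real.sq_sqrt (Finset.sum_nonneg fun _ _ => sq_nonneg _)]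
    ring
  have hφ : HasDerivAt (fun u : ℝ => q ^ 2 * g ^ 2 / 2 * u⁻¹ + β * (Real.sqrt u)⁻¹ + γ)
      (q ^ 2 * g ^ 2 / 2 * (-(s ^ 2)⁻¹) + β * (-(1 / (2 * Real.sqrt s)) / Real.sqrt s ^ 2)) s := by
    have h1 := (hasDerivAt_inv hs.ne').const_mul (q ^ 2 * g ^ 2 / 2)
    have h2 := ((Real.hasDerivAt_sqrt hs.ne').inv (Real.sqrt_pos.mpr hs).ne').const_mul β
    exact (h1.add h2).add_const γ
  have hF := hφ.comp_hasFDerivAt y (hasFDerivAt_sumsq y)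
  rw [← hVfun] at hF
  funext i
  show pd V i y = _
  rw [pd, hF.fderiv]
  simp only [ContinuousLinearMap.smul_apply, ContinuousLinearMap.sum_apply,
    ContinuousLinearMap.proj_apply, Pi.smul_apply, smul_eq_mul]
  rw [Fin.sum_univ_three]
  have hsingle : ∀ j : Fin 3, (Pi.single i 1 : V3) j = if i = j then 1 else 0 := by
    intro j; by_cases h : i = j <;> simp [h, Pi.single_apply]
  rw [hsingle 0, hsingle 1, hsingle 2, hsqrt, ← hrs]
  fin_cases i <;> simp <;> field_simp <;> ring

lemma keyJ (q g β u r a0 a1 a2 b0 b1 b2 c1 c2 : ℝ) (hr : r ≠ 0)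
    (h2 : a0^2+a1^2+a2^2 = r^2)
    (hu : u = a0*b0+a1*b1+a2*b2)
    (hc1 : c1 = q*g/r^3*(b2*a0-b0*a2) + (q^2*g^2/r^4+β/r^3)*a1)
    (hc2 : c2 = q*g/r^3*(b0*a1-b1*a0) + (q^2*g^2/r^4+β/r^3)*a2) :
    (b1*b2 + a1*c2) - (b2*b1 + a2*c1) - q*g*((-(u/r)/r^2)*a0 + r⁻¹*b0) = 0 := by
  subst hu hc1 hc2
  field_simp
  ring_nf
  linear_combination (q*g*b0*r) * h2

lemma keyK (q g β u r a0 a1 a2 b0 b1 b2 c1 c2 j1 j2 : ℝ) (hr : r ≠ 0)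
    (h2 : a0^2+a1^2+a2^2 = r^2)
    (hu : u = a0*b0+a1*b1+a2*b2)
    (hc1 : c1 = q*g/r^3*(b2*a0-b0*a2) + (q^2*g^2/r^4+β/r^3)*a1)
    (hc2 : c2 = q*g/r^3*(b0*a1-b1*a0) + (q^2*g^2/r^4+β/r^3)*a2)
    (hj1 : j1 = a2*b0 - a0*b2 - q*g*r⁻¹*a1)
    (hj2 : j2 = a0*b1 - a1*b0 - q*g*r⁻¹*a2) :
    (c1*j2 + b1*0) - (c2*j1 + b2*0) + β*((-(u/r)/r^2)*a0 + r⁻¹*b0) = 0 := by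
  subst hu hc1 hc2 hj1 hj2
  field_simp
  ring_nf
  linear_combination (-(β*b0*r^2)) * h2


/-- in the flat Kepler-plus-monopole problem with
V(x) = q²g²/(2|x|²) + β/|x| + γ and ẍ = q ẋ × B − ∇V, the Runge–Lenz vector
K = ẋ × J + β x/|x| (with J = x × ẋ − q g x/|x|) is conserved. -/
theorem runge_lenz_conserved (q g β γ : ℝ) (x : ℝ → V3)
    (hx : ContDiff ℝ (⊤ : ℕ∞) x) (hx0 : ∀ t, x t ≠ 0)
    (V : V3 → ℝ)
    (hV : ∀ y, V y = q ^ 2 * g ^ 2 / (2 * norm3 y ^ 2) + β / norm3 y + γ)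
    (heom : ∀ t, deriv (deriv x) t
      = q • crossProduct (deriv x t) (Bmon g (x t)) - grad V (x t))
    (J K : ℝ → V3)
    (hJ : ∀ t, J t = crossProduct (x t) (deriv x t) - (q * g / norm3 (x t)) • x t)
    (hK : ∀ t, K t = crossProduct (deriv x t) (J t) + (β / norm3 (x t)) • x t) :
    ∀ t, deriv K t = 0 := by
  intro t
  have ha : HasDerivAt x (deriv x t) t := (hx.differentiable (by simp) t).hasDerivAt
  have hb : HasDerivAt (deriv x) (deriv (deriv x) t) t :=
    (((contDiff_infty_iff_deriv.mp (hx.of_le (by simp))).2).differentiable (by norm_num) t).hasDerivAt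
  have hai : ∀ i, HasDerivAt (fun τ => x τ i) (deriv x t i) t := fun i => hasDerivAt_pi.mp ha i
  have hbi : ∀ i, HasDerivAt (fun τ => deriv x τ i) (deriv (deriv x) t i) t :=
    fun i => hasDerivAt_pi.mp hb i
  have hr : 0 < norm3 (x t) := norm3_pos _ (hx0 t)
  have hrs : x t 0 ^ 2 + x t 1 ^ 2 + x t 2 ^ 2 = norm3 (x t) ^ 2 := by
    rw [norm3_sq, Fin.sum_univ_three]
  -- acceleration components
  have hC : ∀ i, deriv (deriv x) t i
      = q * g / norm3 (x t) ^ 3 * (crossProduct (deriv x t) (x t)) i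
        + (q ^ 2 * g ^ 2 / norm3 (x t) ^ 4 + β / norm3 (x t) ^ 3) * x t i := by
    intro i
    rw [heom t, gradV q g β γ V hV (x t) (hx0 t)]
    have hcs : crossProduct (deriv x t) ((g / norm3 (x t) ^ 3) • x t)
        = (g / norm3 (x t) ^ 3) • crossProduct (deriv x t) (x t) :=
      LinearMap.map_smul _ _ _
    rw [Bmon, hcs]
    simp only [Pi.sub_apply, Pi.smul_apply, smul_eq_mul]
    ring
  -- derivative of radius
  have hn : HasDerivAt (fun τ => norm3 (x τ))
      ((x t 0 * deriv x t 0 + x t 1 * deriv x t 1 + x t 2 * deriv x t 2) / norm3 (x t)) t := by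
    have hsum : HasDerivAt (fun τ => x τ 0 ^ 2 + x τ 1 ^ 2 + x τ 2 ^ 2)
        ((2 * x t 0 ^ 1 * deriv x t 0 + 2 * x t 1 ^ 1 * deriv x t 1)
          + 2 * x t 2 ^ 1 * deriv x t 2) t :=
      (((hai 0).pow 2).add ((hai 1).pow 2)).add ((hai 2).pow 2)
    have hS : x t 0 ^ 2 + x t 1 ^ 2 + x t 2 ^ 2 ≠ 0 := by
      rw [hrs]; positivity
    have h := (Real.hasDerivAt_sqrt hS).comp t hsum
    have hfun : (fun τ => norm3 (x τ))
        = fun τ => Real.sqrt (x τ 0 ^ 2 + x τ 1 ^ 2 + x τ 2 ^ 2) := by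
      funext τ; rw [norm3, Fin.sum_univ_three]
    rw [hfun]
    refine h.congr_deriv (Eq.symm ?_)
    have hsq : Real.sqrt (x t 0 ^ 2 + x t 1 ^ 2 + x t 2 ^ 2) = norm3 (x t) := by
      rw [norm3, Fin.sum_univ_three]
    rw [hsq]
    field_simp
  have hninv : HasDerivAt (fun τ => (norm3 (x τ))⁻¹)
      (-((x t 0 * deriv x t 0 + x t 1 * deriv x t 1 + x t 2 * deriv x t 2) / norm3 (x t))
        / norm3 (x t) ^ 2) t := hn.inv hr.ne'
  -- J is conserved, componentwise
  have hJd0 : HasDerivAt (fun τ => J τ 0) 0 t := by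
    have hfun : (fun τ => J τ 0) = fun τ =>
        x τ 1 * deriv x τ 2 - x τ 2 * deriv x τ 1 - q * g * ((norm3 (x τ))⁻¹ * x τ 0) := by
      funext τ; rw [hJ τ]; simp [cross_apply, div_eq_mul_inv]; ring
    rw [hfun]
    have h := (((hai 1).mul (hbi 2)).sub ((hai 2).mul (hbi 1))).sub
      (HasDerivAt.const_mul (q*g) (hninv.mul (hai 0)))
    refine h.congr_deriv (Eq.symm ?_)
    refine (keyJ q g β _ (norm3 (x t)) (x t 0) (x t 1) (x t 2)
      (deriv x t 0) (deriv x t 1) (deriv x t 2)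
      (deriv (deriv x) t 1) (deriv (deriv x) t 2) hr.ne'
      (by linear_combination hrs) rfl
      (by rw [hC 1]; simp [cross_apply]; try ring)
      (by rw [hC 2]; simp [cross_apply]; try ring)).symm
  have hJd1 : HasDerivAt (fun τ => J τ 1) 0 t := by
    have hfun : (fun τ => J τ 1) = fun τ =>
        x τ 2 * deriv x τ 0 - x τ 0 * deriv x τ 2 - q * g * ((norm3 (x τ))⁻¹ * x τ 1) := by
      funext τ; rw [hJ τ]; simp [cross_apply, div_eq_mul_inv]; ring
    rw [hfun]
    have h := (((hai 2).mul (hbi 0)).sub ((hai 0).mul (hbi 2))).sub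
      (HasDerivAt.const_mul (q*g) (hninv.mul (hai 1)))
    refine h.congr_deriv (Eq.symm ?_)
    refine (keyJ q g β _ (norm3 (x t)) (x t 1) (x t 2) (x t 0)
      (deriv x t 1) (deriv x t 2) (deriv x t 0)
      (deriv (deriv x) t 2) (deriv (deriv x) t 0) hr.ne'
      (by linear_combination hrs) (by ring)
      (by rw [hC 2]; simp [cross_apply]; try ring)
      (by rw [hC 0]; simp [cross_apply]; try ring)).symm
  have hJd2 : HasDerivAt (fun τ => J τ 2) 0 t := by
    have hfun : (fun τ => J τ 2) = fun τ =>
        x τ 0 * deriv x τ 1 - x τ 1 * deriv x τ 0 - q * g * ((norm3 (x τ))⁻¹ * x τ 2) := by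
      funext τ; rw [hJ τ]; simp [cross_apply, div_eq_mul_inv]; ring
    rw [hfun]
    have h := (((hai 0).mul (hbi 1)).sub ((hai 1).mul (hbi 0))).sub
      (HasDerivAt.const_mul (q*g) (hninv.mul (hai 2)))
    refine h.congr_deriv (Eq.symm ?_)
    refine (keyJ q g β _ (norm3 (x t)) (x t 2) (x t 0) (x t 1)
      (deriv x t 2) (deriv x t 0) (deriv x t 1)
      (deriv (deriv x) t 0) (deriv (deriv x) t 1) hr.ne'
      (by linear_combination hrs) (by ring)
      (by rw [hC 0]; simp [cross_apply]; try ring)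
      (by rw [hC 1]; simp [cross_apply]; try ring)).symm
  -- K components
  have hKd0 : HasDerivAt (fun τ => K τ 0) 0 t := by
    have hfun : (fun τ => K τ 0) = fun τ =>
        deriv x τ 1 * J τ 2 - deriv x τ 2 * J τ 1 + β * ((norm3 (x τ))⁻¹ * x τ 0) := by
      funext τ; rw [hK τ]; simp [cross_apply, div_eq_mul_inv]; ring
    rw [hfun]
    have h := (((hbi 1).mul hJd2).sub ((hbi 2).mul hJd1)).add
      (HasDerivAt.const_mul β (hninv.mul (hai 0)))
    refine h.congr_deriv (Eq.symm ?_)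
    refine (keyK q g β _ (norm3 (x t)) (x t 0) (x t 1) (x t 2)
      (deriv x t 0) (deriv x t 1) (deriv x t 2)
      (deriv (deriv x) t 1) (deriv (deriv x) t 2) (J t 1) (J t 2) hr.ne'
      (by linear_combination hrs) rfl
      (by rw [hC 1]; simp [cross_apply]; try ring)
      (by rw [hC 2]; simp [cross_apply]; try ring)
      (by rw [hJ t]; simp [cross_apply, div_eq_mul_inv]; try ring)
      (by rw [hJ t]; simp [cross_apply, div_eq_mul_inv]; try ring)).symm
  have hKd1 : HasDerivAt (fun τ => K τ 1) 0 t := by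
    have hfun : (fun τ => K τ 1) = fun τ =>
        deriv x τ 2 * J τ 0 - deriv x τ 0 * J τ 2 + β * ((norm3 (x τ))⁻¹ * x τ 1) := by
      funext τ; rw [hK τ]; simp [cross_apply, div_eq_mul_inv]; ring
    rw [hfun]
    have h := (((hbi 2).mul hJd0).sub ((hbi 0).mul hJd2)).add
      (HasDerivAt.const_mul β (hninv.mul (hai 1)))
    refine h.congr_deriv (Eq.symm ?_)
    refine (keyK q g β _ (norm3 (x t)) (x t 1) (x t 2) (x t 0)
      (deriv x t 1) (deriv x t 2) (deriv x t 0)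
      (deriv (deriv x) t 2) (deriv (deriv x) t 0) (J t 2) (J t 0) hr.ne'
      (by linear_combination hrs) (by ring)
      (by rw [hC 2]; simp [cross_apply]; try ring)
      (by rw [hC 0]; simp [cross_apply]; try ring)
      (by rw [hJ t]; simp [cross_apply, div_eq_mul_inv]; try ring)
      (by rw [hJ t]; simp [cross_apply, div_eq_mul_inv]; try ring)).symm
  have hKd2 : HasDerivAt (fun τ => K τ 2) 0 t := by
    have hfun : (fun τ => K τ 2) = fun τ =>
        deriv x τ 0 * J τ 1 - deriv x τ 1 * J τ 0 + β * ((norm3 (x τ))⁻¹ * x τ 2) := by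
      funext τ; rw [hK τ]; simp [cross_apply, div_eq_mul_inv]; ring
    rw [hfun]
    have h := (((hbi 0).mul hJd1).sub ((hbi 1).mul hJd0)).add
      (HasDerivAt.const_mul β (hninv.mul (hai 2)))
    refine h.congr_deriv (Eq.symm ?_)
    refine (keyK q g β _ (norm3 (x t)) (x t 2) (x t 0) (x t 1)
      (deriv x t 2) (deriv x t 0) (deriv x t 1)
      (deriv (deriv x) t 0) (deriv (deriv x) t 1) (J t 0) (J t 1) hr.ne'
      (by linear_combination hrs) (by ring)
      (by rw [hC 0]; simp [cross_apply]; try ring)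
      (by rw [hC 1]; simp [cross_apply]; try ring)
      (by rw [hJ t]; simp [cross_apply, div_eq_mul_inv]; try ring)
      (by rw [hJ t]; simp [cross_apply, div_eq_mul_inv]; try ring)).symm
  have hKd : HasDerivAt K (0 : V3) t := by
    rw [hasDerivAt_pi]
    intro i
    fin_cases i
    · exact hKd0
    · exact hKd1
    · exact hKd2
  exact hKd.deriv
end
end

section
/- Let Q = C + C^i Π_i + (1/2) C^{ij} Π_i Π_j (with C^{ij} symmetric) and H = (1/2)|Π|² + G(x) on flat phase space ℝ³ × ℝ³ with bracket {x^i,Π_j} = δ^i_j, {Π_i,Π_j} = q F_{ij}. Then {Q,H} = 0 identically in Π if and only if: (i) C^m ∂_m G = 0, (ii) ∂_n C = q F_{nm} C^m + C_n^m ∂_m G, (iii) ∂_i C_l + ∂_l C_i = q(F_{im} C_l^m + F_{lm} C_i^m), and (iv) ∂_(i C_jl) = 0. -/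
open Matrix BigOperators

noncomputable section

abbrev Phase := V3 × V3

def pdx (f : Phase → ℝ) (k : Fin 3) (z : Phase) : ℝ :=
  fderiv ℝ f z ((Pi.single k 1 : V3), (0 : V3))

def pdp (f : Phase → ℝ) (k : Fin 3) (z : Phase) : ℝ :=
  fderiv ℝ f z ((0 : V3), (Pi.single k 1 : V3))



/-- Covariant Poisson bracket. -/
def pbr (q : ℝ) (F : V3 → Fin 3 → Fin 3 → ℝ) (B D : Phase → ℝ) (z : Phase) : ℝ :=
  (∑ k, (pdx B k z * pdp D k z - pdp B k z * pdx D k z))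
    + q * ∑ k, ∑ l, F z.1 k l * pdp B k z * pdp D l z

lemma coordCLM (i : Fin 3) (z : Phase) :
    HasFDerivAt (fun z : Phase => z.2 i)
      (((ContinuousLinearMap.proj i : V3 →L[ℝ] ℝ).comp
        (ContinuousLinearMap.snd ℝ V3 V3))) z :=
  ((ContinuousLinearMap.proj i : V3 →L[ℝ] ℝ).comp
        (ContinuousLinearMap.snd ℝ V3 V3)).hasFDerivAt

section quad
variable (C : V3 → ℝ) (Cv : Fin 3 → V3 → ℝ) (Ct : Fin 3 → Fin 3 → V3 → ℝ) (x p : V3)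

lemma quadDeriv (hC : Differentiable ℝ C) (hCv : ∀ i, Differentiable ℝ (Cv i))
    (hCt : ∀ i j, Differentiable ℝ (Ct i j)) (k : Fin 3) :
    pdx (fun z : Phase => C z.1 + (∑ i, Cv i z.1 * z.2 i)
      + (1 / 2) * ∑ i, ∑ j, Ct i j z.1 * z.2 i * z.2 j) k (x, p)
      = pd C k x + (∑ i, pd (Cv i) k x * p i)
        + (1 / 2) * ∑ i, ∑ j, pd (Ct i j) k x * p i * p j ∧
    pdp (fun z : Phase => C z.1 + (∑ i, Cv i z.1 * z.2 i)
      + (1 / 2) * ∑ i, ∑ j, Ct i j z.1 * z.2 i * z.2 j) k (x, p)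
      = Cv k x + (1 / 2) * ((∑ i, Ct i k x * p i) + (∑ j, Ct k j x * p j)) := by
  have h1 : HasFDerivAt (fun z : Phase => C z.1)
      ((fderiv ℝ C x).comp (ContinuousLinearMap.fst ℝ V3 V3)) (x, p) :=
    ((hC x).hasFDerivAt).comp (x, p) (hasFDerivAt_fst)
  have h2 := HasFDerivAt.sum (fun i (_ : i ∈ Finset.univ) =>
    ((((hCv i) x).hasFDerivAt.comp ((x, p) : Phase) hasFDerivAt_fst).mul (coordCLM i (x, p))))
  have h3 := HasFDerivAt.const_mul (HasFDerivAt.sum (fun i (_ : i ∈ Finset.univ) =>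
    HasFDerivAt.sum (fun j (_ : j ∈ Finset.univ) =>
      ((((hCt i j) x).hasFDerivAt.comp ((x, p) : Phase) hasFDerivAt_fst).mul
        (coordCLM i (x, p))).mul (coordCLM j (x, p))))) (1/2 : ℝ)
  have hder' : HasFDerivAt (fun z : Phase => C z.1 + (∑ i, Cv i z.1 * z.2 i)
      + (1 / 2) * ∑ i, ∑ j, Ct i j z.1 * z.2 i * z.2 j) _ (x, p) := (h1.add h2).add h3
  constructor
  · show fderiv ℝ _ _ _ = _
    rw [hder'.fderiv]
    simp [pd, ContinuousLinearMap.comp_apply, Pi.single_apply, Finset.sum_ite_eq',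
      mul_comm, Finset.sum_add_distrib, Finset.sum_ite_irrel, Finset.sum_const_zero]
  · show fderiv ℝ _ _ _ = _
    rw [hder'.fderiv]
    simp [pd, ContinuousLinearMap.comp_apply, Pi.single_apply, Finset.sum_ite_eq',
      mul_comm, Finset.sum_add_distrib, Finset.sum_ite_irrel, Finset.sum_const_zero]
    ring

lemma hamDeriv (G : V3 → ℝ) (hG : Differentiable ℝ G) (k : Fin 3) :
    pdx (fun z : Phase => (1 / 2) * (∑ i, z.2 i ^ 2) + G z.1) k (x, p) = pd G k x ∧
    pdp (fun z : Phase => (1 / 2) * (∑ i, z.2 i ^ 2) + G z.1) k (x, p) = p k := by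
  have h1 : HasFDerivAt (fun z : Phase => G z.1)
      ((fderiv ℝ G x).comp (ContinuousLinearMap.fst ℝ V3 V3)) (x, p) :=
    ((hG x).hasFDerivAt).comp (x, p) (hasFDerivAt_fst)
  have h2 := HasFDerivAt.const_mul (HasFDerivAt.sum (fun i (_ : i ∈ Finset.univ) =>
    (coordCLM i (x, p)).mul (coordCLM i (x, p)))) (1/2 : ℝ)
  have hder' : HasFDerivAt (fun z : Phase => (1 / 2) * (∑ i, z.2 i * z.2 i) + G z.1) _ (x, p) :=
    h2.add h1
  have hfun : (fun z : Phase => (1 / 2) * (∑ i, z.2 i ^ 2) + G z.1)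
      = (fun z : Phase => (1 / 2) * (∑ i, z.2 i * z.2 i) + G z.1) := by
    funext z; simp [pow_two]
  rw [hfun]
  constructor
  · show fderiv ℝ _ _ _ = _
    rw [hder'.fderiv]
    simp [pd, ContinuousLinearMap.comp_apply, Pi.single_apply, Finset.sum_ite_eq',
      Finset.sum_ite_irrel, Finset.sum_const_zero]
  · show fderiv ℝ _ _ _ = _
    rw [hder'.fderiv]
    simp [pd, ContinuousLinearMap.comp_apply, Pi.single_apply, Finset.sum_ite_eq',
      mul_ite, Finset.sum_ite_irrel, Finset.sum_const_zero, Finset.sum_add_distrib]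
    ring

lemma pbr_key (hC : Differentiable ℝ C) (hCv : ∀ i, Differentiable ℝ (Cv i))
    (hCt : ∀ i j, Differentiable ℝ (Ct i j)) (q : ℝ) (F : V3 → Fin 3 → Fin 3 → ℝ)
    (hFanti : ∀ x i j, F x i j = -F x j i)
    (hCtsymm : ∀ i j y, Ct i j y = Ct j i y)
    (G : V3 → ℝ) (hG : Differentiable ℝ G) :
    pbr q F
      (fun z : Phase => C z.1 + (∑ i, Cv i z.1 * z.2 i)
        + (1 / 2) * ∑ i, ∑ j, Ct i j z.1 * z.2 i * z.2 j)
      (fun z : Phase => (1 / 2) * (∑ i, z.2 i ^ 2) + G z.1) (x, p)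
    = -(∑ m, Cv m x * pd G m x)
      + (∑ n, (pd C n x - q * (∑ m, F x n m * Cv m x) - ∑ m, Ct n m x * pd G m x) * p n)
      + (∑ i, ∑ l, (1/2) * (pd (Cv l) i x + pd (Cv i) l x
          - q * ∑ m, (F x i m * Ct l m x + F x l m * Ct i m x)) * (p i * p l))
      + (∑ i, ∑ j, ∑ l, (1/6) * (pd (Ct j l) i x + pd (Ct i l) j x + pd (Ct i j) l x)
          * (p i * p j * p l)) := by
  rw [pbr]
  have e1 : ∀ k, pdx (fun z : Phase => C z.1 + (∑ i, Cv i z.1 * z.2 i)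
      + (1 / 2) * ∑ i, ∑ j, Ct i j z.1 * z.2 i * z.2 j) k (x, p)
      = pd C k x + (∑ i, pd (Cv i) k x * p i)
        + (1 / 2) * ∑ i, ∑ j, pd (Ct i j) k x * p i * p j :=
    fun k => (quadDeriv C Cv Ct x p hC hCv hCt k).1
  have e2 : ∀ k, pdp (fun z : Phase => C z.1 + (∑ i, Cv i z.1 * z.2 i)
      + (1 / 2) * ∑ i, ∑ j, Ct i j z.1 * z.2 i * z.2 j) k (x, p)
      = Cv k x + (1 / 2) * ((∑ i, Ct i k x * p i) + (∑ j, Ct k j x * p j)) :=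
    fun k => (quadDeriv C Cv Ct x p hC hCv hCt k).2
  have e3 : ∀ k, pdx (fun z : Phase => (1 / 2) * (∑ i, z.2 i ^ 2) + G z.1) k (x, p) = pd G k x :=
    fun k => (hamDeriv x p G hG k).1
  have e4 : ∀ k, pdp (fun z : Phase => (1 / 2) * (∑ i, z.2 i ^ 2) + G z.1) k (x, p) = p k :=
    fun k => (hamDeriv x p G hG k).2
  simp only [e1, e2, e3, e4]
  simp only [Fin.sum_univ_three]
  rw [show Ct 1 0 = Ct 0 1 from funext (hCtsymm 1 0),
      show Ct 2 0 = Ct 0 2 from funext (hCtsymm 2 0),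
      show Ct 2 1 = Ct 1 2 from funext (hCtsymm 2 1)]
  have hd : ∀ i, F x i i = 0 := fun i => by have := hFanti x i i; linarith
  rw [hFanti x 1 0, hFanti x 2 0, hFanti x 2 1, hd 0, hd 1, hd 2]
  ring

end quad

lemma fin3_all (P : Fin 3 → Prop) (h0 : P 0) (h1 : P 1) (h2 : P 2) : ∀ n, P n :=
  fun n => match n with | 0 => h0 | 1 => h1 | 2 => h2

set_option maxHeartbeats 2000000 in
lemma cubic_coeffs (B0 : ℝ) (B1 : Fin 3 → ℝ) (B2 : Fin 3 → Fin 3 → ℝ)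
    (B3 : Fin 3 → Fin 3 → Fin 3 → ℝ)
    (hsym2 : ∀ i l, B2 i l = B2 l i)
    (hsym3a : ∀ i j l, B3 i j l = B3 j i l)
    (hsym3b : ∀ i j l, B3 i j l = B3 i l j)
    (h : ∀ p : V3, B0 + (∑ n, B1 n * p n) + (∑ i, ∑ l, B2 i l * (p i * p l))
      + (∑ i, ∑ j, ∑ l, B3 i j l * (p i * p j * p l)) = 0) :
    B0 = 0 ∧ (∀ n, B1 n = 0) ∧ (∀ i l, B2 i l = 0) ∧ (∀ i j l, B3 i j l = 0) := by
  have hP := fun a b c : ℝ => h ![a, b, c]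
  clear h
  simp only [Fin.sum_univ_three, Matrix.cons_val_zero, Matrix.cons_val_one,
    Matrix.head_cons, Matrix.cons_val_two, Matrix.tail_cons] at hP
  refine ⟨?_, ?_, ?_, ?_⟩
  · linear_combination (1/1 : ℝ) * hP 0 0 0
  · refine fin3_all _ ?_ ?_ ?_
    · linear_combination (-11/6 : ℝ) * hP 0 0 0 + (3/1 : ℝ) * hP 1 0 0 +
        (-3/2 : ℝ) * hP 2 0 0 + (1/3 : ℝ) * hP 3 0 0
    · linear_combination (-11/6 : ℝ) * hP 0 0 0 + (3/1 : ℝ) * hP 0 1 0 +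
        (-3/2 : ℝ) * hP 0 2 0 + (1/3 : ℝ) * hP 0 3 0
    · linear_combination (-11/6 : ℝ) * hP 0 0 0 + (3/1 : ℝ) * hP 0 0 1 +
        (-3/2 : ℝ) * hP 0 0 2 + (1/3 : ℝ) * hP 0 0 3
  · refine fin3_all _ ?_ ?_ ?_ <;> refine fin3_all _ ?_ ?_ ?_
    · linear_combination (1/1 : ℝ) * hP 0 0 0 + (-5/2 : ℝ) * hP 1 0 0 +
        (2/1 : ℝ) * hP 2 0 0 + (-1/2 : ℝ) * hP 3 0 0
    · linear_combination (1/1 : ℝ) * hP 0 0 0 + (-5/4 : ℝ) * hP 1 0 0 +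
        (1/4 : ℝ) * hP 2 0 0 + (-5/4 : ℝ) * hP 0 1 0 +
        (1/4 : ℝ) * hP 0 2 0 + (3/2 : ℝ) * hP 1 1 0 +
        (-1/4 : ℝ) * hP 1 2 0 + (-1/4 : ℝ) * hP 2 1 0 +
        (1/2 : ℝ) * hsym2 0 1
    · linear_combination (1/1 : ℝ) * hP 0 0 0 + (-5/4 : ℝ) * hP 1 0 0 +
        (1/4 : ℝ) * hP 2 0 0 + (-5/4 : ℝ) * hP 0 0 1 +
        (1/4 : ℝ) * hP 0 0 2 + (3/2 : ℝ) * hP 1 0 1 +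
        (-1/4 : ℝ) * hP 1 0 2 + (-1/4 : ℝ) * hP 2 0 1 +
        (1/2 : ℝ) * hsym2 0 2
    · linear_combination (1/1 : ℝ) * hP 0 0 0 + (-5/4 : ℝ) * hP 1 0 0 +
        (1/4 : ℝ) * hP 2 0 0 + (-5/4 : ℝ) * hP 0 1 0 +
        (1/4 : ℝ) * hP 0 2 0 + (3/2 : ℝ) * hP 1 1 0 +
        (-1/4 : ℝ) * hP 1 2 0 + (-1/4 : ℝ) * hP 2 1 0 +
        (-1/2 : ℝ) * hsym2 0 1
    · linear_combination (1/1 : ℝ) * hP 0 0 0 + (-5/2 : ℝ) * hP 0 1 0 +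
        (2/1 : ℝ) * hP 0 2 0 + (-1/2 : ℝ) * hP 0 3 0
    · linear_combination (1/1 : ℝ) * hP 0 0 0 + (-5/4 : ℝ) * hP 0 1 0 +
        (1/4 : ℝ) * hP 0 2 0 + (-5/4 : ℝ) * hP 0 0 1 +
        (1/4 : ℝ) * hP 0 0 2 + (3/2 : ℝ) * hP 0 1 1 +
        (-1/4 : ℝ) * hP 0 1 2 + (-1/4 : ℝ) * hP 0 2 1 +
        (1/2 : ℝ) * hsym2 1 2
    · linear_combination (1/1 : ℝ) * hP 0 0 0 + (-5/4 : ℝ) * hP 1 0 0 +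
        (1/4 : ℝ) * hP 2 0 0 + (-5/4 : ℝ) * hP 0 0 1 +
        (1/4 : ℝ) * hP 0 0 2 + (3/2 : ℝ) * hP 1 0 1 +
        (-1/4 : ℝ) * hP 1 0 2 + (-1/4 : ℝ) * hP 2 0 1 +
        (-1/2 : ℝ) * hsym2 0 2
    · linear_combination (1/1 : ℝ) * hP 0 0 0 + (-5/4 : ℝ) * hP 0 1 0 +
        (1/4 : ℝ) * hP 0 2 0 + (-5/4 : ℝ) * hP 0 0 1 +
        (1/4 : ℝ) * hP 0 0 2 + (3/2 : ℝ) * hP 0 1 1 +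
        (-1/4 : ℝ) * hP 0 1 2 + (-1/4 : ℝ) * hP 0 2 1 +
        (-1/2 : ℝ) * hsym2 1 2
    · linear_combination (1/1 : ℝ) * hP 0 0 0 + (-5/2 : ℝ) * hP 0 0 1 +
        (2/1 : ℝ) * hP 0 0 2 + (-1/2 : ℝ) * hP 0 0 3
  · refine fin3_all _ ?_ ?_ ?_ <;> refine fin3_all _ ?_ ?_ ?_ <;> refine fin3_all _ ?_ ?_ ?_
    · linear_combination (-1/6 : ℝ) * hP 0 0 0 + (1/2 : ℝ) * hP 1 0 0 +
        (-1/2 : ℝ) * hP 2 0 0 + (1/6 : ℝ) * hP 3 0 0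
    · linear_combination (-1/6 : ℝ) * hP 0 0 0 + (1/3 : ℝ) * hP 1 0 0 +
        (-1/6 : ℝ) * hP 2 0 0 + (1/6 : ℝ) * hP 0 1 0 +
        (-1/3 : ℝ) * hP 1 1 0 + (1/6 : ℝ) * hP 2 1 0 +
        (2/3 : ℝ) * hsym3b 0 0 1 + (1/3 : ℝ) * hsym3a 0 1 0
    · linear_combination (-1/6 : ℝ) * hP 0 0 0 + (1/3 : ℝ) * hP 1 0 0 +
        (-1/6 : ℝ) * hP 2 0 0 + (1/6 : ℝ) * hP 0 0 1 +
        (-1/3 : ℝ) * hP 1 0 1 + (1/6 : ℝ) * hP 2 0 1 +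
        (2/3 : ℝ) * hsym3b 0 0 2 + (1/3 : ℝ) * hsym3a 0 2 0
    · linear_combination (-1/6 : ℝ) * hP 0 0 0 + (1/3 : ℝ) * hP 1 0 0 +
        (-1/6 : ℝ) * hP 2 0 0 + (1/6 : ℝ) * hP 0 1 0 +
        (-1/3 : ℝ) * hP 1 1 0 + (1/6 : ℝ) * hP 2 1 0 +
        (-1/3 : ℝ) * hsym3b 0 0 1 + (1/3 : ℝ) * hsym3a 0 1 0
    · linear_combination (-1/6 : ℝ) * hP 0 0 0 + (1/6 : ℝ) * hP 1 0 0 +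
        (1/3 : ℝ) * hP 0 1 0 + (-1/6 : ℝ) * hP 0 2 0 +
        (-1/3 : ℝ) * hP 1 1 0 + (1/6 : ℝ) * hP 1 2 0 +
        (2/3 : ℝ) * hsym3a 0 1 1 + (1/3 : ℝ) * hsym3b 1 0 1
    · linear_combination (-1/6 : ℝ) * hP 0 0 0 + (1/6 : ℝ) * hP 1 0 0 +
        (1/6 : ℝ) * hP 0 1 0 + (1/6 : ℝ) * hP 0 0 1 +
        (-1/6 : ℝ) * hP 1 1 0 + (-1/6 : ℝ) * hP 1 0 1 +
        (-1/6 : ℝ) * hP 0 1 1 + (1/6 : ℝ) * hP 1 1 1 +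
        (1/2 : ℝ) * hsym3a 0 1 2 + (1/3 : ℝ) * hsym3b 0 1 2 +
        (1/6 : ℝ) * hsym3a 0 2 1 + (1/3 : ℝ) * hsym3b 1 0 2 +
        (1/6 : ℝ) * hsym3a 1 2 0
    · linear_combination (-1/6 : ℝ) * hP 0 0 0 + (1/3 : ℝ) * hP 1 0 0 +
        (-1/6 : ℝ) * hP 2 0 0 + (1/6 : ℝ) * hP 0 0 1 +
        (-1/3 : ℝ) * hP 1 0 1 + (1/6 : ℝ) * hP 2 0 1 +
        (-1/3 : ℝ) * hsym3b 0 0 2 + (1/3 : ℝ) * hsym3a 0 2 0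
    · linear_combination (-1/6 : ℝ) * hP 0 0 0 + (1/6 : ℝ) * hP 1 0 0 +
        (1/6 : ℝ) * hP 0 1 0 + (1/6 : ℝ) * hP 0 0 1 +
        (-1/6 : ℝ) * hP 1 1 0 + (-1/6 : ℝ) * hP 1 0 1 +
        (-1/6 : ℝ) * hP 0 1 1 + (1/6 : ℝ) * hP 1 1 1 +
        (1/2 : ℝ) * hsym3a 0 1 2 + (-2/3 : ℝ) * hsym3b 0 1 2 +
        (1/6 : ℝ) * hsym3a 0 2 1 + (1/3 : ℝ) * hsym3b 1 0 2 +
        (1/6 : ℝ) * hsym3a 1 2 0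
    · linear_combination (-1/6 : ℝ) * hP 0 0 0 + (1/6 : ℝ) * hP 1 0 0 +
        (1/3 : ℝ) * hP 0 0 1 + (-1/6 : ℝ) * hP 0 0 2 +
        (-1/3 : ℝ) * hP 1 0 1 + (1/6 : ℝ) * hP 1 0 2 +
        (2/3 : ℝ) * hsym3a 0 2 2 + (1/3 : ℝ) * hsym3b 2 0 2
    · linear_combination (-1/6 : ℝ) * hP 0 0 0 + (1/3 : ℝ) * hP 1 0 0 +
        (-1/6 : ℝ) * hP 2 0 0 + (1/6 : ℝ) * hP 0 1 0 +
        (-1/3 : ℝ) * hP 1 1 0 + (1/6 : ℝ) * hP 2 1 0 +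
        (-1/3 : ℝ) * hsym3b 0 0 1 + (-2/3 : ℝ) * hsym3a 0 1 0
    · linear_combination (-1/6 : ℝ) * hP 0 0 0 + (1/6 : ℝ) * hP 1 0 0 +
        (1/3 : ℝ) * hP 0 1 0 + (-1/6 : ℝ) * hP 0 2 0 +
        (-1/3 : ℝ) * hP 1 1 0 + (1/6 : ℝ) * hP 1 2 0 +
        (-1/3 : ℝ) * hsym3a 0 1 1 + (1/3 : ℝ) * hsym3b 1 0 1
    · linear_combination (-1/6 : ℝ) * hP 0 0 0 + (1/6 : ℝ) * hP 1 0 0 +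
        (1/6 : ℝ) * hP 0 1 0 + (1/6 : ℝ) * hP 0 0 1 +
        (-1/6 : ℝ) * hP 1 1 0 + (-1/6 : ℝ) * hP 1 0 1 +
        (-1/6 : ℝ) * hP 0 1 1 + (1/6 : ℝ) * hP 1 1 1 +
        (-1/2 : ℝ) * hsym3a 0 1 2 + (1/3 : ℝ) * hsym3b 0 1 2 +
        (1/6 : ℝ) * hsym3a 0 2 1 + (1/3 : ℝ) * hsym3b 1 0 2 +
        (1/6 : ℝ) * hsym3a 1 2 0
    · linear_combination (-1/6 : ℝ) * hP 0 0 0 + (1/6 : ℝ) * hP 1 0 0 +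
        (1/3 : ℝ) * hP 0 1 0 + (-1/6 : ℝ) * hP 0 2 0 +
        (-1/3 : ℝ) * hP 1 1 0 + (1/6 : ℝ) * hP 1 2 0 +
        (-1/3 : ℝ) * hsym3a 0 1 1 + (-2/3 : ℝ) * hsym3b 1 0 1
    · linear_combination (-1/6 : ℝ) * hP 0 0 0 + (1/2 : ℝ) * hP 0 1 0 +
        (-1/2 : ℝ) * hP 0 2 0 + (1/6 : ℝ) * hP 0 3 0
    · linear_combination (-1/6 : ℝ) * hP 0 0 0 + (1/3 : ℝ) * hP 0 1 0 +
        (-1/6 : ℝ) * hP 0 2 0 + (1/6 : ℝ) * hP 0 0 1 +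
        (-1/3 : ℝ) * hP 0 1 1 + (1/6 : ℝ) * hP 0 2 1 +
        (2/3 : ℝ) * hsym3b 1 1 2 + (1/3 : ℝ) * hsym3a 1 2 1
    · linear_combination (-1/6 : ℝ) * hP 0 0 0 + (1/6 : ℝ) * hP 1 0 0 +
        (1/6 : ℝ) * hP 0 1 0 + (1/6 : ℝ) * hP 0 0 1 +
        (-1/6 : ℝ) * hP 1 1 0 + (-1/6 : ℝ) * hP 1 0 1 +
        (-1/6 : ℝ) * hP 0 1 1 + (1/6 : ℝ) * hP 1 1 1 +
        (-1/2 : ℝ) * hsym3a 0 1 2 + (1/3 : ℝ) * hsym3b 0 1 2 +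
        (1/6 : ℝ) * hsym3a 0 2 1 + (-2/3 : ℝ) * hsym3b 1 0 2 +
        (1/6 : ℝ) * hsym3a 1 2 0
    · linear_combination (-1/6 : ℝ) * hP 0 0 0 + (1/3 : ℝ) * hP 0 1 0 +
        (-1/6 : ℝ) * hP 0 2 0 + (1/6 : ℝ) * hP 0 0 1 +
        (-1/3 : ℝ) * hP 0 1 1 + (1/6 : ℝ) * hP 0 2 1 +
        (-1/3 : ℝ) * hsym3b 1 1 2 + (1/3 : ℝ) * hsym3a 1 2 1
    · linear_combination (-1/6 : ℝ) * hP 0 0 0 + (1/6 : ℝ) * hP 0 1 0 +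
        (1/3 : ℝ) * hP 0 0 1 + (-1/6 : ℝ) * hP 0 0 2 +
        (-1/3 : ℝ) * hP 0 1 1 + (1/6 : ℝ) * hP 0 1 2 +
        (2/3 : ℝ) * hsym3a 1 2 2 + (1/3 : ℝ) * hsym3b 2 1 2
    · linear_combination (-1/6 : ℝ) * hP 0 0 0 + (1/3 : ℝ) * hP 1 0 0 +
        (-1/6 : ℝ) * hP 2 0 0 + (1/6 : ℝ) * hP 0 0 1 +
        (-1/3 : ℝ) * hP 1 0 1 + (1/6 : ℝ) * hP 2 0 1 +
        (-1/3 : ℝ) * hsym3b 0 0 2 + (-2/3 : ℝ) * hsym3a 0 2 0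
    · linear_combination (-1/6 : ℝ) * hP 0 0 0 + (1/6 : ℝ) * hP 1 0 0 +
        (1/6 : ℝ) * hP 0 1 0 + (1/6 : ℝ) * hP 0 0 1 +
        (-1/6 : ℝ) * hP 1 1 0 + (-1/6 : ℝ) * hP 1 0 1 +
        (-1/6 : ℝ) * hP 0 1 1 + (1/6 : ℝ) * hP 1 1 1 +
        (1/2 : ℝ) * hsym3a 0 1 2 + (-2/3 : ℝ) * hsym3b 0 1 2 +
        (-5/6 : ℝ) * hsym3a 0 2 1 + (1/3 : ℝ) * hsym3b 1 0 2 +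
        (1/6 : ℝ) * hsym3a 1 2 0
    · linear_combination (-1/6 : ℝ) * hP 0 0 0 + (1/6 : ℝ) * hP 1 0 0 +
        (1/3 : ℝ) * hP 0 0 1 + (-1/6 : ℝ) * hP 0 0 2 +
        (-1/3 : ℝ) * hP 1 0 1 + (1/6 : ℝ) * hP 1 0 2 +
        (-1/3 : ℝ) * hsym3a 0 2 2 + (1/3 : ℝ) * hsym3b 2 0 2
    · linear_combination (-1/6 : ℝ) * hP 0 0 0 + (1/6 : ℝ) * hP 1 0 0 +
        (1/6 : ℝ) * hP 0 1 0 + (1/6 : ℝ) * hP 0 0 1 +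
        (-1/6 : ℝ) * hP 1 1 0 + (-1/6 : ℝ) * hP 1 0 1 +
        (-1/6 : ℝ) * hP 0 1 1 + (1/6 : ℝ) * hP 1 1 1 +
        (-1/2 : ℝ) * hsym3a 0 1 2 + (1/3 : ℝ) * hsym3b 0 1 2 +
        (1/6 : ℝ) * hsym3a 0 2 1 + (-2/3 : ℝ) * hsym3b 1 0 2 +
        (-5/6 : ℝ) * hsym3a 1 2 0
    · linear_combination (-1/6 : ℝ) * hP 0 0 0 + (1/3 : ℝ) * hP 0 1 0 +
        (-1/6 : ℝ) * hP 0 2 0 + (1/6 : ℝ) * hP 0 0 1 +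
        (-1/3 : ℝ) * hP 0 1 1 + (1/6 : ℝ) * hP 0 2 1 +
        (-1/3 : ℝ) * hsym3b 1 1 2 + (-2/3 : ℝ) * hsym3a 1 2 1
    · linear_combination (-1/6 : ℝ) * hP 0 0 0 + (1/6 : ℝ) * hP 0 1 0 +
        (1/3 : ℝ) * hP 0 0 1 + (-1/6 : ℝ) * hP 0 0 2 +
        (-1/3 : ℝ) * hP 0 1 1 + (1/6 : ℝ) * hP 0 1 2 +
        (-1/3 : ℝ) * hsym3a 1 2 2 + (1/3 : ℝ) * hsym3b 2 1 2
    · linear_combination (-1/6 : ℝ) * hP 0 0 0 + (1/6 : ℝ) * hP 1 0 0 +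
        (1/3 : ℝ) * hP 0 0 1 + (-1/6 : ℝ) * hP 0 0 2 +
        (-1/3 : ℝ) * hP 1 0 1 + (1/6 : ℝ) * hP 1 0 2 +
        (-1/3 : ℝ) * hsym3a 0 2 2 + (-2/3 : ℝ) * hsym3b 2 0 2
    · linear_combination (-1/6 : ℝ) * hP 0 0 0 + (1/6 : ℝ) * hP 0 1 0 +
        (1/3 : ℝ) * hP 0 0 1 + (-1/6 : ℝ) * hP 0 0 2 +
        (-1/3 : ℝ) * hP 0 1 1 + (1/6 : ℝ) * hP 0 1 2 +
        (-1/3 : ℝ) * hsym3a 1 2 2 + (-2/3 : ℝ) * hsym3b 2 1 2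
    · linear_combination (-1/6 : ℝ) * hP 0 0 0 + (1/2 : ℝ) * hP 0 0 1 +
        (-1/2 : ℝ) * hP 0 0 2 + (1/6 : ℝ) * hP 0 0 3

set_option maxHeartbeats 2000000 in
/-- van Holten's algorithm, quadratic case: for
Q = C + Cᵛⁱ Π_i + ½ Cᵗⁱʲ Π_i Π_j and H = ½|Π|² + G(x), one has {Q,H} = 0
identically iff the four graded constraints hold. -/
theorem van_holten_quadratic_constraints (q : ℝ)
    (F : V3 → Fin 3 → Fin 3 → ℝ)
    (hFsmooth : ∀ i j, ContDiff ℝ (⊤ : ℕ∞) (fun x => F x i j))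
    (hFanti : ∀ x i j, F x i j = -F x j i)
    (C : V3 → ℝ) (Cv : Fin 3 → V3 → ℝ) (Ct : Fin 3 → Fin 3 → V3 → ℝ)
    (G : V3 → ℝ)
    (hC : ContDiff ℝ (⊤ : ℕ∞) C) (hCv : ∀ i, ContDiff ℝ (⊤ : ℕ∞) (Cv i))
    (hCt : ∀ i j, ContDiff ℝ (⊤ : ℕ∞) (Ct i j)) (hG : ContDiff ℝ (⊤ : ℕ∞) G)
    (hCtsymm : ∀ i j x, Ct i j x = Ct j i x)
    (Q H : Phase → ℝ)
    (hQ : ∀ z : Phase, Q z = C z.1 + (∑ i, Cv i z.1 * z.2 i)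
      + (1 / 2) * ∑ i, ∑ j, Ct i j z.1 * z.2 i * z.2 j)
    (hH : ∀ z : Phase, H z = (1 / 2) * (∑ i, z.2 i ^ 2) + G z.1) :
    (∀ z : Phase, pbr q F Q H z = 0) ↔
      ((∀ x : V3, ∑ m, Cv m x * pd G m x = 0)
        ∧ (∀ (x : V3) (n : Fin 3),
            pd C n x = q * (∑ m, F x n m * Cv m x) + ∑ m, Ct n m x * pd G m x)
        ∧ (∀ (x : V3) (i l : Fin 3),
            pd (Cv l) i x + pd (Cv i) l x
              = q * ∑ m, (F x i m * Ct l m x + F x l m * Ct i m x))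
        ∧ (∀ (x : V3) (i j l : Fin 3),
            pd (Ct j l) i x + pd (Ct i l) j x + pd (Ct i j) l x = 0)) := by
  have hC' : Differentiable ℝ C := hC.differentiable (by simp)
  have hCv' : ∀ i, Differentiable ℝ (Cv i) := fun i => (hCv i).differentiable (by simp)
  have hCt' : ∀ i j, Differentiable ℝ (Ct i j) := fun i j => (hCt i j).differentiable (by simp)
  have hG' : Differentiable ℝ G := hG.differentiable (by simp)
  have hkey : ∀ x p : V3, pbr q F Q H (x, p)
      = -(∑ m, Cv m x * pd G m x)
      + (∑ n, (pd C n x - q * (∑ m, F x n m * Cv m x) - ∑ m, Ct n m x * pd G m x) * p n)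
      + (∑ i, ∑ l, (1/2) * (pd (Cv l) i x + pd (Cv i) l x
          - q * ∑ m, (F x i m * Ct l m x + F x l m * Ct i m x)) * (p i * p l))
      + (∑ i, ∑ j, ∑ l, (1/6) * (pd (Ct j l) i x + pd (Ct i l) j x + pd (Ct i j) l x)
          * (p i * p j * p l)) := by
    intro x p
    rw [show Q = _ from funext hQ, show H = _ from funext hH]
    exact pbr_key C Cv Ct x p hC' hCv' hCt' q F hFanti hCtsymm G hG'
  constructor
  · intro hbr
    have main : ∀ x : V3, (∑ m, Cv m x * pd G m x = 0)
        ∧ (∀ n : Fin 3,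
            pd C n x = q * (∑ m, F x n m * Cv m x) + ∑ m, Ct n m x * pd G m x)
        ∧ (∀ i l : Fin 3,
            pd (Cv l) i x + pd (Cv i) l x
              = q * ∑ m, (F x i m * Ct l m x + F x l m * Ct i m x))
        ∧ (∀ i j l : Fin 3,
            pd (Ct j l) i x + pd (Ct i l) j x + pd (Ct i j) l x = 0) := by
      intro x
      obtain ⟨c1, c2, c3, c4⟩ := cubic_coeffs
        (-(∑ m, Cv m x * pd G m x))
        (fun n => pd C n x - q * (∑ m, F x n m * Cv m x) - ∑ m, Ct n m x * pd G m x)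
        (fun i l => (1/2) * (pd (Cv l) i x + pd (Cv i) l x
          - q * ∑ m, (F x i m * Ct l m x + F x l m * Ct i m x)))
        (fun i j l => (1/6) * (pd (Ct j l) i x + pd (Ct i l) j x + pd (Ct i j) l x))
        (by
          intro i l
          beta_reduce
          have e : (∑ m, (F x i m * Ct l m x + F x l m * Ct i m x))
              = ∑ m, (F x l m * Ct i m x + F x i m * Ct l m x) :=
            Finset.sum_congr rfl (fun m _ => add_comm _ _)
          rw [e]
          ring)
        (by
          intro i j l
          beta_reduce
          rw [show Ct i j = Ct j i from funext (hCtsymm i j)]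
          ring)
        (by
          intro i j l
          beta_reduce
          rw [show Ct l j = Ct j l from funext (hCtsymm l j)]
          ring)
        (fun p => (hkey x p).symm.trans (hbr (x, p)))
      refine ⟨by linarith [c1], fun n => by linarith [c2 n],
        fun i l => by linarith [c3 i l], fun i j l => by linarith [c4 i j l]⟩
    exact ⟨fun x => (main x).1, fun x => (main x).2.1,
      fun x => (main x).2.2.1, fun x => (main x).2.2.2⟩
  · rintro ⟨k1, k2, k3, k4⟩ ⟨x, p⟩
    rw [hkey x p, k1 x]
    have s2 : (∑ n, (pd C n x - q * (∑ m, F x n m * Cv m x)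
        - ∑ m, Ct n m x * pd G m x) * p n) = 0 :=
      Finset.sum_eq_zero fun n _ => by rw [k2 x n]; ring
    have s3 : (∑ i, ∑ l, (1/2) * (pd (Cv l) i x + pd (Cv i) l x
        - q * ∑ m, (F x i m * Ct l m x + F x l m * Ct i m x)) * (p i * p l)) = 0 :=
      Finset.sum_eq_zero fun i _ => Finset.sum_eq_zero fun l _ => by rw [k3 x i l]; ring
    have s4 : (∑ i, ∑ j, ∑ l, (1/6) * (pd (Ct j l) i x + pd (Ct i l) j x
        + pd (Ct i j) l x) * (p i * p j * p l)) = 0 :=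
      Finset.sum_eq_zero fun i _ => Finset.sum_eq_zero fun j _ =>
        Finset.sum_eq_zero fun l _ => by rw [k4 x i j l]; ring
    rw [s2, s3, s4]
    ring
end
end
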